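/- Osgood uniqueness lemma: Let t₀ ≤ T be reals. Let f : [t₀,T] → [0,∞) be measurable and bounded, let φ : [t₀,T] → [0,∞) be integrable, and let ϖ : [0,∞) → [0,∞) be continuous, nondecreasing, with ϖ(r) > 0 for r > 0. Assume f(t) ≤ ∫_{t₀}^t φ(τ) ϖ(f(τ)) dτ for every t ∈ [t₀,T], and assume the Osgood condition ∫_0^a dr/ϖ(r) = ∞ for some a > 0 (i.e. the integral diverges at 0). Then f(t) = 0 for every t ∈ [t₀,T]. -/

import Mathlib

open MeasureTheory intervalIntegral Filter

/-!
Let `I t = ∫_{t₀}^t φ ϖ(f)` and `Φ t = ∫_{t₀}^t φ`. Since `f ≤ I` and `ϖ` is nondecreasing,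
for every `ε > 0` the function `u = ε + I` satisfies `u t - u s ≤ ϖ(u t) (Φ t - Φ s)` for
`s ≤ t`. On a short interval to the right of `s` the continuity of `ϖ ∘ u` gives
`ϖ(u t) < c ϖ(u s)` for any fixed `c > 1`, so `∫_{u s}^{u t} dr/ϖ(r) ≤ c (Φ t - Φ s)`; a
continuous induction yields the integrated Bihari bound `∫_ε^{u t} dr/ϖ(r) ≤ Φ t`. If `f t > 0`,
the left side dominates `∫_ε^{f t} dr/ϖ(r)`, which tends to `∞` as `ε → 0⁺` by the Osgood
condition, while the right side does not depend on `ε`.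
-/

open Set Topology

theorem monotoneOn_primitive {g : ℝ → ℝ} {a b : ℝ} (hg : IntegrableOn g (Icc a b))
    (hg_nonneg : ∀ t ∈ Icc a b, 0 ≤ g t) :
    MonotoneOn (fun t => ∫ τ in a..t, g τ) (Icc a b) := by
  intro s hs t ht hst
  refine integral_mono_interval le_rfl hs.1 hst ?_
    ((intervalIntegrable_iff_integrableOn_Icc_of_le (hs.1.trans hst)).2
      (hg.mono_set (Icc_subset_Icc_right ht.2)))
  filter_upwards [ae_restrict_mem measurableSet_Ioc] with τ hτ
  exact hg_nonneg τ ⟨hτ.1.le, hτ.2.trans ht.2⟩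

theorem primitive_mul_sub_le_mul_primitive_sub {φ h : ℝ → ℝ} {a b s t c : ℝ}
    (hφ : IntegrableOn φ (Icc a b)) (hφh : IntegrableOn (fun τ => φ τ * h τ) (Icc a b))
    (hφ_nonneg : ∀ τ ∈ Icc s t, 0 ≤ φ τ) (hh : ∀ τ ∈ Icc s t, h τ ≤ c)
    (hs : s ∈ Icc a b) (ht : t ∈ Icc a b) (hst : s ≤ t) :
    (∫ τ in a..t, φ τ * h τ) - (∫ τ in a..s, φ τ * h τ) ≤
      c * ((∫ τ in a..t, φ τ) - ∫ τ in a..s, φ τ) := by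
  have ha : a ∈ Icc a b := left_mem_Icc.2 (hs.1.trans hs.2)
  have hii : ∀ {g : ℝ → ℝ}, IntegrableOn g (Icc a b) →
      ∀ x ∈ Icc a b, ∀ y ∈ Icc a b, IntervalIntegrable g volume x y :=
    fun hg x hx y hy => (hg.mono_set (uIcc_subset_Icc hx hy)).intervalIntegrable
  rw [integral_interval_sub_left (hii hφh _ ha _ ht) (hii hφh _ ha _ hs),
    integral_interval_sub_left (hii hφ _ ha _ ht) (hii hφ _ ha _ hs),
    ← intervalIntegral.integral_const_mul]
  refine integral_mono_on hst (hii hφh _ hs _ ht) ((hii hφ _ hs _ ht).const_mul c)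
    fun τ hτ => ?_
  rw [mul_comm c]
  exact mul_le_mul_of_nonneg_left (hh τ hτ) (hφ_nonneg τ hτ)

theorem integral_inv_le_sub_div_of_monotoneOn {w : ℝ → ℝ} {x y : ℝ} (hxy : x ≤ y)
    (hw_mono : MonotoneOn w (Icc x y)) (hw_pos : 0 < w x)
    (hw_int : IntervalIntegrable (fun r => (w r)⁻¹) volume x y) :
    ∫ r in x..y, (w r)⁻¹ ≤ (y - x) / w x := by
  calc ∫ r in x..y, (w r)⁻¹ ≤ ∫ _ in x..y, (w x)⁻¹ :=
        integral_mono_on hxy hw_int intervalIntegrable_const fun r hr =>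
          inv_anti₀ hw_pos (hw_mono (left_mem_Icc.2 hxy) hr hr.1)
    _ = (y - x) / w x := by rw [intervalIntegral.integral_const, smul_eq_mul, div_eq_mul_inv]

theorem integral_inv_le_mul_of_sub_le_mul {w : ℝ → ℝ} {x y d c : ℝ} (hxy : x ≤ y)
    (hw_mono : MonotoneOn w (Icc x y)) (hwx : 0 < w x) (hwy : w y ≤ c * w x)
    (hw_int : IntervalIntegrable (fun r => (w r)⁻¹) volume x y) (h : y - x ≤ w y * d) :
    ∫ r in x..y, (w r)⁻¹ ≤ d * c := by
  have hd : 0 ≤ d :=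
    nonneg_of_mul_nonneg_right ((sub_nonneg.2 hxy).trans h)
      (hwx.trans_le (hw_mono (left_mem_Icc.2 hxy) (right_mem_Icc.2 hxy) hxy))
  calc ∫ r in x..y, (w r)⁻¹ ≤ (y - x) / w x :=
        integral_inv_le_sub_div_of_monotoneOn hxy hw_mono hwx hw_int
    _ ≤ d * c := by
        rw [div_le_iff₀ hwx]
        nlinarith [mul_le_mul_of_nonneg_right hwy hd]

theorem ContinuousOn.intervalIntegrable_inv_of_monotoneOn {w : ℝ → ℝ} {r₀ x y : ℝ}
    (hw : ContinuousOn w (Ici r₀)) (hw_mono : MonotoneOn w (Ici r₀)) (hw_pos : 0 < w r₀)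
    (hx : r₀ ≤ x) (hy : r₀ ≤ y) : IntervalIntegrable (fun r => (w r)⁻¹) volume x y :=
  ((hw.inv₀ fun _ hr => (hw_pos.trans_le (hw_mono self_mem_Ici hr hr)).ne').mono
    fun _ hr => le_trans (le_min hx hy) hr.1).intervalIntegrable

section Bihari

variable {u Φ w : ℝ → ℝ} {t₀ T t : ℝ}

theorem integral_inv_comp_le_sub_mul_of_sub_le_mul {c : ℝ} (hc : 1 < c)
    (hu : ContinuousOn u (Icc t₀ T)) (hu_mono : MonotoneOn u (Icc t₀ T))
    (hΦ : ContinuousOn Φ (Icc t₀ T))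
    (hw : ContinuousOn w (Ici (u t₀))) (hw_mono : MonotoneOn w (Ici (u t₀)))
    (hw_pos : 0 < w (u t₀))
    (hstep : ∀ s ∈ Icc t₀ T, ∀ t ∈ Icc t₀ T, s ≤ t → u t - u s ≤ w (u t) * (Φ t - Φ s))
    (ht : t ∈ Icc t₀ T) :
    ∫ r in u t₀..u t, (w r)⁻¹ ≤ (Φ t - Φ t₀) * c := by
  have hT : T ∈ Icc t₀ T := ⟨ht.1.trans ht.2, le_rfl⟩
  have hu_mem : MapsTo u (Icc t₀ T) (Icc (u t₀) (u T)) := fun s hs =>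
    ⟨hu_mono (left_mem_Icc.2 hT.1) hs hs.1, hu_mono hs hT hs.2⟩
  have hw_pos' : ∀ r ∈ Ici (u t₀), 0 < w r := fun r hr =>
    hw_pos.trans_le (hw_mono self_mem_Ici hr hr)
  have hint : ∀ x ∈ Ici (u t₀), ∀ y ∈ Ici (u t₀),
      IntervalIntegrable (fun r => (w r)⁻¹) volume x y := fun _ hx _ hy =>
    hw.intervalIntegrable_inv_of_monotoneOn hw_mono hw_pos hx hy
  set G := fun t => ∫ r in u t₀..u t, (w r)⁻¹
  have hG : ContinuousOn G (Icc t₀ T) :=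
    (continuousOn_primitive_interval' (hint _ self_mem_Ici _ (hu_mem hT).1)
      left_mem_uIcc).comp hu fun s hs => Icc_subset_uIcc (hu_mem hs)
  set S := {t ∈ Icc t₀ T | G t ≤ (Φ t - Φ t₀) * c}
  suffices Icc t₀ T ⊆ S from (this ht).2
  refine IsClosed.Icc_subset_of_forall_mem_nhdsWithin ?_ ?_ ?_
  · rw [inter_eq_left.2 (sep_subset _ _)]
    exact isClosed_Icc.isClosed_le hG ((hΦ.sub continuousOn_const).mul continuousOn_const)
  · exact ⟨left_mem_Icc.2 hT.1, by simp [G]⟩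
  · rintro s ⟨⟨hs, hGs⟩, hs'⟩
    have hnear : ∀ᶠ t in 𝓝[Icc t₀ T] s, w (u t) < c * w (u s) :=
      ((hw.comp hu fun r hr => (hu_mem hr).1) s hs).eventually_lt_const
        (lt_mul_of_one_lt_left (hw_pos' _ (hu_mem hs).1) hc)
    filter_upwards [nhdsWithin_le_of_mem (Icc_mem_nhdsGT_of_mem hs') hnear,
      Icc_mem_nhdsGT_of_mem hs', self_mem_nhdsWithin] with t hwt ht hst
    refine ⟨ht, ?_⟩
    calc G t = G s + ∫ r in u s..u t, (w r)⁻¹ :=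
          (integral_add_adjacent_intervals (hint _ self_mem_Ici _ (hu_mem hs).1)
            (hint _ (hu_mem hs).1 _ (hu_mem ht).1)).symm
      _ ≤ (Φ s - Φ t₀) * c + (Φ t - Φ s) * c :=
          add_le_add hGs <| integral_inv_le_mul_of_sub_le_mul (hu_mono hs ht hst.le)
            (hw_mono.mono fun r hr => (hu_mem hs).1.trans hr.1) (hw_pos' _ (hu_mem hs).1)
            hwt.le (hint _ (hu_mem hs).1 _ (hu_mem ht).1) (hstep s hs t ht hst.le)
      _ = (Φ t - Φ t₀) * c := by ring

theorem integral_inv_comp_le_sub_of_sub_le_mul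
    (hu : ContinuousOn u (Icc t₀ T)) (hu_mono : MonotoneOn u (Icc t₀ T))
    (hΦ : ContinuousOn Φ (Icc t₀ T))
    (hw : ContinuousOn w (Ici (u t₀))) (hw_mono : MonotoneOn w (Ici (u t₀)))
    (hw_pos : 0 < w (u t₀))
    (hstep : ∀ s ∈ Icc t₀ T, ∀ t ∈ Icc t₀ T, s ≤ t → u t - u s ≤ w (u t) * (Φ t - Φ s))
    (ht : t ∈ Icc t₀ T) :
    ∫ r in u t₀..u t, (w r)⁻¹ ≤ Φ t - Φ t₀ := by
  have ht₀ : t₀ ∈ Icc t₀ T := left_mem_Icc.2 (ht.1.trans ht.2)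
  have hut : u t₀ ≤ u t := hu_mono ht₀ ht ht.1
  have hΦ_nonneg : 0 ≤ Φ t - Φ t₀ :=
    nonneg_of_mul_nonneg_right ((sub_nonneg.2 hut).trans (hstep t₀ ht₀ t ht ht.1))
      (hw_pos.trans_le (hw_mono self_mem_Ici hut hut))
  exact (le_iff_forall_one_lt_le_mul₀ hΦ_nonneg).2 fun c hc =>
    integral_inv_comp_le_sub_mul_of_sub_le_mul hc hu hu_mono hΦ hw hw_mono hw_pos hstep ht

end Bihari

theorem tendsto_integral_nhdsGT_zero_atTop_of_tendsto {g : ℝ → ℝ} {a b : ℝ}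
    (hg : ContinuousOn g (Ioi 0)) (ha : 0 < a) (hb : 0 < b)
    (h : Tendsto (fun ε => ∫ r in ε..a, g r) (𝓝[>] 0) atTop) :
    Tendsto (fun ε => ∫ r in ε..b, g r) (𝓝[>] 0) atTop := by
  have hint : ∀ {x y : ℝ}, 0 < x → 0 < y → IntervalIntegrable g volume x y := fun hx hy =>
    (hg.mono fun r hr => lt_of_lt_of_le (lt_min hx hy) hr.1).intervalIntegrable
  refine (tendsto_atTop_add_const_right _ (∫ r in a..b, g r) h).congr' ?_
  filter_upwards [self_mem_nhdsWithin] with ε hε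
  exact integral_add_adjacent_intervals (hint hε ha) (hint ha hb)

theorem MeasureTheory.IntegrableOn.mul_comp_of_monotoneOn {α : Type*} [MeasurableSpace α]
    {μ : Measure α} {s : Set α} {φ f : α → ℝ} {ϖ : ℝ → ℝ} {M : ℝ} (hs : MeasurableSet s)
    (hφ : IntegrableOn φ s μ) (hf : AEMeasurable f (μ.restrict s))
    (hf_nonneg : ∀ t ∈ s, 0 ≤ f t) (hf_le : ∀ t ∈ s, f t ≤ M)
    (hϖ_cont : ContinuousOn ϖ (Ici 0)) (hϖ_mono : MonotoneOn ϖ (Ici 0))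
    (hϖ_nonneg : ∀ r, 0 ≤ r → 0 ≤ ϖ r) :
    IntegrableOn (fun τ => φ τ * ϖ (f τ)) s μ := by
  refine Integrable.mul_bdd (c := ϖ M) hφ ?_ ?_
  · have hcont : Continuous fun r => ϖ (max r 0) :=
      hϖ_cont.comp_continuous (continuous_id.max continuous_const) fun r => le_max_right r 0
    refine (hcont.measurable.comp_aemeasurable hf).aestronglyMeasurable.congr ?_
    filter_upwards [ae_restrict_mem hs] with τ hτ
    simp [max_eq_left (hf_nonneg τ hτ)]
  · filter_upwards [ae_restrict_mem hs] with τ hτ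
    rw [Real.norm_of_nonneg (hϖ_nonneg _ (hf_nonneg τ hτ))]
    exact hϖ_mono (hf_nonneg τ hτ) ((hf_nonneg τ hτ).trans (hf_le τ hτ)) (hf_le τ hτ)

theorem integral_inv_le_integral_of_le_integral_mul_comp {t₀ T t ε : ℝ} {f φ ϖ : ℝ → ℝ}
    (hg : IntegrableOn (fun τ => φ τ * ϖ (f τ)) (Icc t₀ T))
    (hφ_int : IntegrableOn φ (Icc t₀ T)) (hφ_nonneg : ∀ t ∈ Icc t₀ T, 0 ≤ φ t)
    (hf_nonneg : ∀ t ∈ Icc t₀ T, 0 ≤ f t)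
    (hϖ_cont : ContinuousOn ϖ (Ici 0)) (hϖ_mono : MonotoneOn ϖ (Ici 0))
    (hϖ_nonneg : ∀ r, 0 ≤ r → 0 ≤ ϖ r) (hϖ_pos : ∀ r, 0 < r → 0 < ϖ r)
    (hineq : ∀ t ∈ Icc t₀ T, f t ≤ ∫ τ in t₀..t, φ τ * ϖ (f τ))
    (hε : 0 < ε) (ht : t ∈ Icc t₀ T) (hεf : ε ≤ f t) :
    ∫ r in ε..f t, (ϖ r)⁻¹ ≤ ∫ τ in t₀..t, φ τ := by
  have hT : t₀ ≤ T := ht.1.trans ht.2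
  have ht₀ : t₀ ∈ Icc t₀ T := left_mem_Icc.2 hT
  have hprim : ∀ {g : ℝ → ℝ}, IntegrableOn g (Icc t₀ T) →
      ContinuousOn (fun t => ∫ τ in t₀..t, g τ) (Icc t₀ T) := fun hg => by
    rw [← uIcc_of_le hT] at hg ⊢
    exact continuousOn_primitive_interval hg
  set I := fun t => ∫ τ in t₀..t, φ τ * ϖ (f τ)
  have hI_mono : MonotoneOn I (Icc t₀ T) := monotoneOn_primitive hg fun τ hτ =>
    mul_nonneg (hφ_nonneg τ hτ) (hϖ_nonneg _ (hf_nonneg τ hτ))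
  have hI_nonneg : ∀ t ∈ Icc t₀ T, 0 ≤ I t := fun t ht => by
    simpa [I] using hI_mono ht₀ ht ht.1
  have hstep : ∀ s ∈ Icc t₀ T, ∀ t ∈ Icc t₀ T, s ≤ t → (ε + I t) - (ε + I s) ≤
      ϖ (ε + I t) * ((∫ τ in t₀..t, φ τ) - ∫ τ in t₀..s, φ τ) := by
    intro s hs t ht hst
    rw [add_sub_add_left_eq_sub]
    refine primitive_mul_sub_le_mul_primitive_sub hφ_int hg
      (fun τ hτ => hφ_nonneg τ (Icc_subset_Icc hs.1 ht.2 hτ)) (fun τ hτ => ?_) hs ht hst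
    have hτ' : τ ∈ Icc t₀ T := Icc_subset_Icc hs.1 ht.2 hτ
    exact hϖ_mono (hf_nonneg τ hτ') (by linarith [hI_nonneg t ht] : 0 ≤ ε + I t)
      (by linarith [hineq τ hτ', hI_mono hτ' ht hτ.2])
  have hu₀ : ε + I t₀ = ε := by simp [I]
  have hIci : Ici (ε + I t₀) ⊆ Ici 0 := by
    rw [hu₀]
    exact Ici_subset_Ici.2 hε.le
  have hbihari := integral_inv_comp_le_sub_of_sub_le_mul (u := fun t => ε + I t)
    (continuousOn_const.add (hprim hg))
    (fun s hs t ht hst => add_le_add_right (hI_mono hs ht hst) ε) (hprim hφ_int)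
    (hϖ_cont.mono hIci) (hϖ_mono.mono hIci) (by rw [hu₀]; exact hϖ_pos ε hε) hstep ht
  simp only [hu₀, integral_same, sub_zero] at hbihari
  refine le_trans (integral_mono_interval le_rfl hεf (by linarith [hineq t ht]) ?_ ?_) hbihari
  · filter_upwards [ae_restrict_mem measurableSet_Ioc] with r hr
    exact inv_nonneg.2 (hϖ_nonneg r (hε.le.trans hr.1.le))
  · exact ContinuousOn.intervalIntegrable_inv_of_monotoneOn (hϖ_cont.mono (Ici_subset_Ici.2 hε.le))
      (hϖ_mono.mono (Ici_subset_Ici.2 hε.le)) (hϖ_pos ε hε) le_rfl (by linarith [hI_nonneg t ht])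

theorem osgood_uniqueness_general (t₀ T a : ℝ) (ha : 0 < a)
    (f φ ϖ : ℝ → ℝ)
    (hf_meas : AEMeasurable f (volume.restrict (Set.Icc t₀ T)))
    (hf_nonneg : ∀ t ∈ Set.Icc t₀ T, 0 ≤ f t)
    (hf_bdd : ∃ M : ℝ, ∀ t ∈ Set.Icc t₀ T, f t ≤ M)
    (hφ_int : IntegrableOn φ (Set.Icc t₀ T) volume)
    (hφ_nonneg : ∀ t ∈ Set.Icc t₀ T, 0 ≤ φ t)
    (hϖ_cont : ContinuousOn ϖ (Set.Ici (0 : ℝ)))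
    (hϖ_mono : MonotoneOn ϖ (Set.Ici (0 : ℝ)))
    (hϖ_nonneg : ∀ r : ℝ, 0 ≤ r → 0 ≤ ϖ r)
    (hϖ_pos : ∀ r : ℝ, 0 < r → 0 < ϖ r)
    (hineq : ∀ t ∈ Set.Icc t₀ T, f t ≤ ∫ τ in t₀..t, φ τ * ϖ (f τ))
    (hosgood : Tendsto (fun ε => ∫ r in ε..a, (ϖ r)⁻¹)
      (nhdsWithin 0 (Set.Ioi (0 : ℝ))) atTop) :
    ∀ t ∈ Set.Icc t₀ T, f t = 0 := by
  obtain ⟨M, hM⟩ := hf_bdd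
  have hg := hφ_int.mul_comp_of_monotoneOn measurableSet_Icc hf_meas hf_nonneg hM hϖ_cont
    hϖ_mono hϖ_nonneg
  intro t ht
  refine le_antisymm (not_lt.1 fun hft => ?_) (hf_nonneg t ht)
  have hdiv := tendsto_integral_nhdsGT_zero_atTop_of_tendsto
    ((hϖ_cont.mono Ioi_subset_Ici_self).inv₀ fun r hr => (hϖ_pos r hr).ne') ha hft hosgood
  obtain ⟨ε, hbig, hε⟩ :=
    ((hdiv.eventually_gt_atTop (∫ τ in t₀..t, φ τ)).and (Ioo_mem_nhdsGT hft)).exists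
  exact hbig.not_ge (integral_inv_le_integral_of_le_integral_mul_comp hg hφ_int hφ_nonneg
    hf_nonneg hϖ_cont hϖ_mono hϖ_nonneg hϖ_pos hineq hε.1 ht hε.2.le)

/-- **Osgood uniqueness lemma.** Let `t₀ ≤ T`, let `f ≥ 0` be measurable and bounded on
`[t₀, T]`, `φ ≥ 0` integrable on `[t₀, T]`, and `ϖ : [0,∞) → [0,∞)` continuous,
nondecreasing, positive on `(0, ∞)`. Assume `f t ≤ ∫_{t₀}^t φ τ · ϖ (f τ) dτ` on
`[t₀, T]` and the Osgood condition `∫_0^a dr / ϖ r = ∞` for some `a > 0` (i.e. the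
integrals `∫_ε^a dr / ϖ r` are finite for `0 < ε < a` and tend to `+∞` as `ε → 0⁺`).
Then `f ≡ 0` on `[t₀, T]`. -/
theorem osgood_uniqueness (t₀ T a : ℝ) (htT : t₀ ≤ T) (ha : 0 < a)
    (f φ ϖ : ℝ → ℝ)
    (hf_meas : AEMeasurable f (volume.restrict (Set.Icc t₀ T)))
    (hf_nonneg : ∀ t ∈ Set.Icc t₀ T, 0 ≤ f t)
    (hf_bdd : ∃ M : ℝ, ∀ t ∈ Set.Icc t₀ T, f t ≤ M)
    (hφ_int : IntegrableOn φ (Set.Icc t₀ T) volume)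
    (hφ_nonneg : ∀ t ∈ Set.Icc t₀ T, 0 ≤ φ t)
    (hϖ_cont : ContinuousOn ϖ (Set.Ici (0 : ℝ)))
    (hϖ_mono : MonotoneOn ϖ (Set.Ici (0 : ℝ)))
    (hϖ_nonneg : ∀ r : ℝ, 0 ≤ r → 0 ≤ ϖ r)
    (hϖ_pos : ∀ r : ℝ, 0 < r → 0 < ϖ r)
    (hineq : ∀ t ∈ Set.Icc t₀ T, f t ≤ ∫ τ in t₀..t, φ τ * ϖ (f τ))
    (hosgood_int : ∀ ε ∈ Set.Ioo (0 : ℝ) a,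
      IntervalIntegrable (fun r => (ϖ r)⁻¹) volume ε a)
    (hosgood : Tendsto (fun ε => ∫ r in ε..a, (ϖ r)⁻¹)
      (nhdsWithin 0 (Set.Ioi (0 : ℝ))) atTop) :
    ∀ t ∈ Set.Icc t₀ T, f t = 0 :=
  osgood_uniqueness_general t₀ T a ha f φ ϖ hf_meas hf_nonneg hf_bdd hφ_int hφ_nonneg hϖ_cont
    hϖ_mono hϖ_nonneg hϖ_pos hineq hosgood
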